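/- arXiv:1908.00713 — 5 statements merged into one kernel-verified Lean document; each statement's English description precedes it below -/
import Mathlib

section
/- Every base-b palindrome with an even number of digits is a b-wARH number. -/
/-! Write the palindrome `N` with `2k` digits as high half `n = N / b^k` over low half; the low
half is `n^R`, so `N = b^k n + n^R = m + m^R` for `m = b^k n`, since trailing zeros do not change
the reversal. Its digit sum is `2 s_b(n) ≤ 2n ≤ m`, so `A = m - s_b(N)` works. -/

/-- Sum of the base-`b` digits of `N`. -/
def sumDigits (b N : ℕ) : ℕ := (Nat.digits b N).sum

/-- The base-`b` reversal of `N`. -/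
def revDigits (b N : ℕ) : ℕ := Nat.ofDigits b (Nat.digits b N).reverse

/-- `N` is a `b`-wARH number. -/
def IsWARH (b N : ℕ) : Prop :=
  ∃ A : ℕ, N = (A + sumDigits b N) + revDigits b (A + sumDigits b N)

theorem List.Palindrome.take_eq_reverse_drop {α : Type*} {l : List α} (hl : l.Palindrome)
    {k : ℕ} (hk : l.length = 2 * k) : l.take k = (l.drop k).reverse := by
  rw [List.reverse_drop, hl.reverse_eq, show l.length - k = k by omega]

namespace Nat

theorem digits_div_base {b : ℕ} (hb : 1 < b) (n : ℕ) : digits b (n / b) = (digits b n).tail := by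
  rcases n.eq_zero_or_pos with rfl | hn
  · simp
  · rw [digits_def' hb hn, List.tail_cons]

theorem digits_div_pow {b : ℕ} (hb : 1 < b) (k n : ℕ) :
    digits b (n / b ^ k) = (digits b n).drop k := by
  induction k with
  | zero => simp
  | succ k ih =>
    rw [pow_succ, ← Nat.div_div_eq_div_mul, digits_div_base hb, ih, List.tail_drop]

end Nat

theorem revDigits_base_pow_mul {b : ℕ} (hb : 1 < b) (k n : ℕ) :
    revDigits b (b ^ k * n) = revDigits b n := by
  rcases n.eq_zero_or_pos with rfl | hn
  · simp
  · rw [revDigits, revDigits, Nat.digits_base_pow_mul hb hn, List.reverse_append,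
      List.reverse_replicate, Nat.ofDigits_append_replicate_zero]

theorem eq_base_pow_mul_div_add_revDigits_of_palindrome {b N k : ℕ} (hb : 2 ≤ b)
    (hpal : (Nat.digits b N).Palindrome) (hk : (Nat.digits b N).length = 2 * k) :
    N = b ^ k * (N / b ^ k) + revDigits b (N / b ^ k) := by
  have hlow : N % b ^ k = revDigits b (N / b ^ k) := by
    rw [Nat.self_mod_pow_eq_ofDigits_take k N hb, hpal.take_eq_reverse_drop hk, revDigits,
      Nat.digits_div_pow hb]
  rw [← hlow, add_comm, Nat.mod_add_div]

theorem sumDigits_eq_two_mul_sumDigits_div_of_palindrome {b N k : ℕ} (hb : 1 < b)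
    (hpal : (Nat.digits b N).Palindrome) (hk : (Nat.digits b N).length = 2 * k) :
    sumDigits b N = 2 * sumDigits b (N / b ^ k) := by
  rw [sumDigits, ← List.take_append_drop k (Nat.digits b N), List.sum_append,
    hpal.take_eq_reverse_drop hk, List.sum_reverse, sumDigits, Nat.digits_div_pow hb]
  ring

theorem isWARH_of_eq_add_revDigits {b N m : ℕ} (hN : N = m + revDigits b m)
    (hsum : sumDigits b N ≤ m) : IsWARH b N :=
  ⟨m - sumDigits b N, by rwa [Nat.sub_add_cancel hsum]⟩

theorem even_palindrome_isWARH (b N : ℕ) (hb : 2 ≤ b) (hN : 0 < N)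
    (hpal : (Nat.digits b N).Palindrome)
    (heven : Even (Nat.digits b N).length) :
    IsWARH b N := by
  obtain ⟨k, hk⟩ := heven
  replace hk : (Nat.digits b N).length = 2 * k := by omega
  have hk0 : k ≠ 0 := by
    rintro rfl
    exact Nat.digits_ne_nil_iff_ne_zero.mpr hN.ne' (List.length_eq_zero_iff.mp hk)
  set n := N / b ^ k
  apply isWARH_of_eq_add_revDigits (m := b ^ k * n)
  · rw [revDigits_base_pow_mul hb]
    exact eq_base_pow_mul_div_add_revDigits_of_palindrome hb hpal hk
  · calc sumDigits b N = 2 * sumDigits b n :=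
        sumDigits_eq_two_mul_sumDigits_div_of_palindrome hb hpal hk
      _ ≤ 2 * n := Nat.mul_le_mul_left 2 (Nat.digit_sum_le b n)
      _ ≤ b ^ k * n := Nat.mul_le_mul_right n (hb.trans (Nat.le_self_pow hk0 b))
end

section
/- For every b ≥ 2 there exist infinitely many b-wARH numbers that are not b-Niven numbers. Specifically, for each k ≥ 1 the palindrome N_k with base-b digit string 1 (0 repeated k times) (b-1)(b-1) (0 repeated k times) 1 is a b-wARH number whose digit sum is 2b, and N_k is not divisible by 2b (since N_k is not divisible by b). -/
/-- `N` is a `b`-Niven number. -/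
def IsNiven (b N : ℕ) : Prop := 0 < N ∧ sumDigits b N ∣ N

lemma ofDigits_rep_zero (b k : ℕ) : Nat.ofDigits b (List.replicate k 0) = 0 := by
  induction k with
  | zero => simp [Nat.ofDigits]
  | succ n ih => simp [List.replicate_succ, Nat.ofDigits_cons, ih]

/-- digit list of N_k, little-endian -/
def LN (b k : ℕ) : List ℕ :=
  1 :: (List.replicate k 0 ++ (b-1) :: (b-1) :: (List.replicate k 0 ++ [1]))

/-- digit list of M_k, little-endian -/
def LM (b k : ℕ) : List ℕ := List.replicate (k+2) 0 ++ (b-1) :: (List.replicate k 0 ++ [1])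

lemma ofLN (b k : ℕ) :
    Nat.ofDigits b (LN b k)
      = 1 + (b - 1) * b ^ (k + 1) + (b - 1) * b ^ (k + 2) + b ^ (2 * k + 3) := by
  simp [LN, Nat.ofDigits_cons, Nat.ofDigits_append, ofDigits_rep_zero, Nat.ofDigits]
  ring

lemma ofLM (b k : ℕ) :
    Nat.ofDigits b (LM b k) = (b - 1) * b ^ (k + 2) + b ^ (2 * k + 3) := by
  simp [LM, Nat.ofDigits_cons, Nat.ofDigits_append, ofDigits_rep_zero, Nat.ofDigits]
  ring

lemma ofLMrev (b k : ℕ) :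
    Nat.ofDigits b (LM b k).reverse = 1 + (b - 1) * b ^ (k + 1) := by
  simp [LM, Nat.ofDigits_cons, Nat.ofDigits_append, ofDigits_rep_zero, Nat.ofDigits,
    List.reverse_replicate]
  ring

lemma digitsLN (b k : ℕ) (hb : 2 ≤ b) :
    Nat.digits b (Nat.ofDigits b (LN b k)) = LN b k := by
  apply Nat.digits_ofDigits b hb
  · intro l hl
    simp [LN] at hl
    rcases hl with h | h | h | h <;> omega
  · intro h
    simp [LN]

lemma digitsLM (b k : ℕ) (hb : 2 ≤ b) :
    Nat.digits b (Nat.ofDigits b (LM b k)) = LM b k := by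
  apply Nat.digits_ofDigits b hb
  · intro l hl
    simp [LM] at hl
    rcases hl with h | h | h <;> omega
  · intro h
    simp [LM]

lemma sumN (b k : ℕ) (hb : 2 ≤ b) :
    sumDigits b (1 + (b - 1) * b ^ (k + 1) + (b - 1) * b ^ (k + 2) + b ^ (2 * k + 3)) = 2 * b := by
  rw [← ofLN, sumDigits, digitsLN b k hb]
  simp [LN, List.sum_replicate]
  omega

lemma warhN (b k : ℕ) (hb : 2 ≤ b) :
    IsWARH b (1 + (b - 1) * b ^ (k + 1) + (b - 1) * b ^ (k + 2) + b ^ (2 * k + 3)) := by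
  have hM : 2 * b ≤ (b - 1) * b ^ (k + 2) + b ^ (2 * k + 3) := by
    have h1 : b ^ 2 ≤ b ^ (2 * k + 3) := Nat.pow_le_pow_right (by omega) (by omega)
    have h0 : 2 * b ≤ b ^ 2 := by nlinarith
    omega
  refine ⟨(b - 1) * b ^ (k + 2) + b ^ (2 * k + 3) - 2 * b, ?_⟩
  rw [sumN b k hb]
  have hA : (b - 1) * b ^ (k + 2) + b ^ (2 * k + 3) - 2 * b + 2 * b
      = (b - 1) * b ^ (k + 2) + b ^ (2 * k + 3) := Nat.sub_add_cancel hM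
  rw [hA, revDigits, ← ofLM, digitsLM b k hb, ofLM, ofLMrev]
  ring

lemma ndvdN (b k : ℕ) (hb : 2 ≤ b) :
    ¬ b ∣ (1 + (b - 1) * b ^ (k + 1) + (b - 1) * b ^ (k + 2) + b ^ (2 * k + 3)) := by
  intro h
  have h1 : b ∣ (b - 1) * b ^ (k + 1) + (b - 1) * b ^ (k + 2) + b ^ (2 * k + 3) := by
    refine Dvd.dvd.add (Dvd.dvd.add ?_ ?_) ?_
    · exact Dvd.dvd.mul_left (dvd_pow_self b (by omega)) _
    · exact Dvd.dvd.mul_left (dvd_pow_self b (by omega)) _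
    · exact dvd_pow_self b (by omega)
  have h2 : b ∣ (b - 1) * b ^ (k + 1) + (b - 1) * b ^ (k + 2) + b ^ (2 * k + 3) + 1 := by
    rwa [show 1 + (b - 1) * b ^ (k + 1) + (b - 1) * b ^ (k + 2) + b ^ (2 * k + 3)
      = (b - 1) * b ^ (k + 1) + (b - 1) * b ^ (k + 2) + b ^ (2 * k + 3) + 1 by ring] at h
  have h3 : b ∣ 1 := (Nat.dvd_add_right h1).mp h2
  have := Nat.le_of_dvd one_pos h3
  omega

lemma n2dvdN (b k : ℕ) (hb : 2 ≤ b) :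
    ¬ 2 * b ∣ (1 + (b - 1) * b ^ (k + 1) + (b - 1) * b ^ (k + 2) + b ^ (2 * k + 3)) := by
  intro h
  exact ndvdN b k hb (dvd_trans (dvd_mul_left b 2) h)

lemma memS (b k : ℕ) (hb : 2 ≤ b) :
    (1 + (b - 1) * b ^ (k + 1) + (b - 1) * b ^ (k + 2) + b ^ (2 * k + 3))
      ∈ {N : ℕ | IsWARH b N ∧ ¬ IsNiven b N} := by
  refine ⟨warhN b k hb, fun hn => ?_⟩
  rw [IsNiven, sumN b k hb] at hn
  exact n2dvdN b k hb hn.2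

lemma Nbounds (b k : ℕ) (hb : 2 ≤ b) :
    b ^ (2 * k + 3) ≤ 1 + (b - 1) * b ^ (k + 1) + (b - 1) * b ^ (k + 2) + b ^ (2 * k + 3)
      ∧ 1 + (b - 1) * b ^ (k + 1) + (b - 1) * b ^ (k + 2) + b ^ (2 * k + 3) < b ^ (2 * k + 4) := by
  constructor
  · omega
  · have hlen : (LN b k).length = 2 * k + 4 := by simp [LN]; ring
    have hd : ∀ x ∈ LN b k, x < b := by
      intro l hl
      simp [LN] at hl
      rcases hl with h | h | h | h <;> omega
    have := Nat.ofDigits_lt_base_pow_length (b := b) (l := LN b k) hb hd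
    rwa [ofLN, hlen] at this

theorem warh_not_niven_infinite (b : ℕ) (hb : 2 ≤ b) :
    {N : ℕ | IsWARH b N ∧ ¬ IsNiven b N}.Infinite ∧
    ∀ k : ℕ, 1 ≤ k →
      (IsWARH b (1 + (b - 1) * b ^ (k + 1) + (b - 1) * b ^ (k + 2) + b ^ (2 * k + 3)) ∧
       sumDigits b (1 + (b - 1) * b ^ (k + 1) + (b - 1) * b ^ (k + 2) + b ^ (2 * k + 3)) = 2 * b ∧
       ¬ b ∣ (1 + (b - 1) * b ^ (k + 1) + (b - 1) * b ^ (k + 2) + b ^ (2 * k + 3)) ∧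
       ¬ 2 * b ∣ (1 + (b - 1) * b ^ (k + 1) + (b - 1) * b ^ (k + 2) + b ^ (2 * k + 3))) := by
  constructor
  · refine Set.infinite_of_injective_forall_mem
      (f := fun k : ℕ => 1 + (b - 1) * b ^ (k + 1) + (b - 1) * b ^ (k + 2) + b ^ (2 * k + 3))
      ?_ ?_
    · have hmono : StrictMono
          (fun k : ℕ => 1 + (b - 1) * b ^ (k + 1) + (b - 1) * b ^ (k + 2) + b ^ (2 * k + 3)) := by
        apply strictMono_nat_of_lt_succ
        intro k
        have h1 := (Nbounds b k hb).2
        have h2 := (Nbounds b (k + 1) hb).1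
        have h3 : b ^ (2 * k + 4) ≤ b ^ (2 * (k + 1) + 3) :=
          Nat.pow_le_pow_right (by omega) (by omega)
        omega
      exact hmono.injective
    · intro k
      exact memS b k hb
  · intro k _
    exact ⟨warhN b k hb, sumN b k hb, ndvdN b k hb, n2dvdN b k hb⟩
end

section
/- The square of every base-b palindrome with at least two digits is a b-wMRH number. -/
/-- `N` is a `b`-wMRH number. -/
def IsWMRH (b N : ℕ) : Prop :=
  ∃ A : ℕ, N = (A + sumDigits b N) * revDigits b (A + sumDigits b N)

/-!
Taking `A = P - s_b(P²)` reduces the theorem to the inequality `s_b(P²) ≤ P`. Dropping the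
lowest `k` digits of `N` costs at most `k (b - 1)` in digit sum, so `s_b(N) ≤ ⌊N / b^k⌋ + k (b - 1)`;
for a `d`-digit `P` and `k = d + 1` this gives `s_b(P²) ≤ ⌊P / b⌋ + (d + 1)(b - 1)`, which is at
most `P` as soon as `b (d + 1) ≤ P`. That covers every palindrome except the two-digit ones
`a (b + 1)` with `a ≤ 2`, whose squares have the digits `a², 2a², a²` when `b` is large, and
finitely many small cases.
-/

theorem sumDigits_le_div_pow_add {b : ℕ} (hb : 1 < b) (k N : ℕ) :
    sumDigits b N ≤ N / b ^ k + k * (b - 1) := by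
  induction k generalizing N with
  | zero => simpa [sumDigits] using Nat.digit_sum_le b N
  | succ k ih =>
    rcases Nat.eq_zero_or_pos N with rfl | hN
    · simp [sumDigits]
    have hdigit : N % b < b := Nat.mod_lt N (by omega)
    have hrest := ih (N / b)
    rw [Nat.div_div_eq_div_mul, ← pow_succ'] at hrest
    rw [sumDigits, Nat.digits_def' hb hN, List.sum_cons, ← sumDigits, add_one_mul]
    omega

theorem sumDigits_sq_le_of_mul_succ_le {b d P : ℕ} (hb : 1 < b) (hPd : P < b ^ d)
    (h : b * (d + 1) ≤ P) : sumDigits b (P ^ 2) ≤ P := by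
  have hsq : P ^ 2 / b ^ (d + 1) ≤ P / b := by
    rw [pow_succ b, ← Nat.div_div_eq_div_mul]
    exact Nat.div_le_div_right (Nat.div_le_of_le_mul (by nlinarith))
  have hd : d + 1 ≤ P / b := (Nat.le_div_iff_mul_le (by omega)).mpr (by linarith)
  calc sumDigits b (P ^ 2) ≤ P ^ 2 / b ^ (d + 1) + (d + 1) * (b - 1) :=
        sumDigits_le_div_pow_add hb _ _
    _ ≤ P / b + P / b * (b - 1) := by gcongr
    _ = P / b * (1 + (b - 1)) := by ring
    _ = P / b * b := by rw [Nat.add_sub_cancel' hb.le]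
    _ ≤ P := Nat.div_mul_le_self P b

theorem sumDigits_ofDigits {b : ℕ} (hb : 1 < b) {L : List ℕ} (hlt : ∀ l ∈ L, l < b)
    (hlast : ∀ h : L ≠ [], L.getLast h ≠ 0) : sumDigits b (Nat.ofDigits b L) = L.sum := by
  rw [sumDigits, Nat.digits_ofDigits b hb L hlt hlast]

theorem sumDigits_succ_sq {b : ℕ} (hb : 3 ≤ b) : sumDigits b ((b + 1) ^ 2) = 4 := by
  have : (b + 1) ^ 2 = Nat.ofDigits b [1, 2, 1] := by simp [Nat.ofDigits]; ring
  rw [this, sumDigits_ofDigits (by omega) (by simp; omega) (by simp)]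
  rfl

theorem sumDigits_two_mul_succ_sq {b : ℕ} (hb : 9 ≤ b) : sumDigits b ((2 * (b + 1)) ^ 2) = 16 := by
  have : (2 * (b + 1)) ^ 2 = Nat.ofDigits b [4, 8, 4] := by simp [Nat.ofDigits]; ring
  rw [this, sumDigits_ofDigits (by omega) (by simp; omega) (by simp)]
  rfl

theorem exists_eq_mul_succ_of_palindrome_of_length_eq_two {b P : ℕ} (hb : 1 < b)
    (hpal : (Nat.digits b P).Palindrome) (hlen : (Nat.digits b P).length = 2) :
    ∃ a, 0 < a ∧ a < b ∧ P = a * (b + 1) := by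
  obtain ⟨x, y, hxy⟩ := List.length_eq_two.mp hlen
  have hyx : y = x := (by simpa [hxy] using hpal.reverse_eq : y = x ∧ x = y).1
  subst hyx
  have hP : P ≠ 0 := by rintro rfl; simp at hxy
  refine ⟨y, Nat.pos_of_ne_zero ?_, Nat.digits_lt_base hb (m := P) (by simp [hxy]), ?_⟩
  · simpa [hxy] using Nat.getLast_digit_ne_zero b hP
  · rw [← Nat.ofDigits_digits b P, hxy]
    simp [Nat.ofDigits]
    ring

theorem sumDigits_sq_mul_succ_le {a b : ℕ} (ha : 0 < a) (hab : a < b) :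
    sumDigits b ((a * (b + 1)) ^ 2) ≤ a * (b + 1) := by
  obtain rfl | rfl | ha3 : a = 1 ∨ a = 2 ∨ 3 ≤ a := by omega
  · obtain rfl | hb : b = 2 ∨ 3 ≤ b := by omega
    · norm_num [sumDigits]
    · rw [one_mul, sumDigits_succ_sq hb]; omega
  · obtain hb | hb : b < 9 ∨ 9 ≤ b := by omega
    · interval_cases b <;> norm_num [sumDigits]
    · rw [sumDigits_two_mul_succ_sq hb]; omega
  · exact sumDigits_sq_le_of_mul_succ_le (d := 2) (by omega) (by nlinarith) (by nlinarith)

theorem sumDigits_sq_le_of_pow_le_of_lt_mul {b m P : ℕ} (hb : 2 ≤ b)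
    (hpow : b ^ (m + 3) ≤ b * P) (hlt : P < b * (m + 4)) : sumDigits b (P ^ 2) ≤ P := by
  have hsmall : b ^ (m + 1) < m + 4 := by
    have : b ^ (m + 1) * b ^ 2 < (m + 4) * b ^ 2 := by rw [← pow_add]; nlinarith
    exact Nat.lt_of_mul_lt_mul_right this
  have hm : m ≤ 1 := by
    have h2pow : 2 ^ (m + 1) ≤ b ^ (m + 1) := Nat.pow_le_pow_left hb _
    have : m < 2 ^ m := Nat.lt_two_pow_self
    rw [pow_succ 2 m] at h2pow
    omega
  have hb4 : b ≤ 4 := (Nat.le_self_pow (n := m + 1) (by omega) b).trans (by omega)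
  interval_cases m <;> interval_cases b <;> norm_num at hlt hsmall <;>
    interval_cases P <;> norm_num [sumDigits]

theorem sumDigits_sq_le_of_palindrome {b P : ℕ} (hb : 2 ≤ b) (hP : b ≤ P)
    (hpal : (Nat.digits b P).Palindrome) : sumDigits b (P ^ 2) ≤ P := by
  set d := (Nat.digits b P).length with hd
  have hPd : P < b ^ d := Nat.lt_base_pow_length_digits hb
  have hbd : b ^ d ≤ b * P := Nat.base_pow_length_digits_le b P hb (by omega)
  have hd2 : 2 ≤ d := by
    by_contra! h
    interval_cases d <;> simp at hPd <;> omega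
  by_cases hgen : b * (d + 1) ≤ P
  · exact sumDigits_sq_le_of_mul_succ_le hb hPd hgen
  obtain h2 | ⟨m, hm⟩ : d = 2 ∨ ∃ m, d = m + 3 :=
    (Nat.lt_or_ge d 3).imp (by omega) fun h => ⟨d - 3, by omega⟩
  · obtain ⟨a, ha, hab, rfl⟩ :=
      exists_eq_mul_succ_of_palindrome_of_length_eq_two hb hpal (hd.symm.trans h2)
    exact sumDigits_sq_mul_succ_le ha hab
  · rw [hm] at hbd hgen
    exact sumDigits_sq_le_of_pow_le_of_lt_mul hb hbd (Nat.lt_of_not_le hgen)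

theorem revDigits_eq_self_of_palindrome {b P : ℕ} (hpal : (Nat.digits b P).Palindrome) :
    revDigits b P = P := by
  rw [revDigits, hpal.reverse_eq, Nat.ofDigits_digits]

theorem palindrome_sq_isWMRH (b P : ℕ) (hb : 2 ≤ b) (hP : b ≤ P)
    (hpal : (Nat.digits b P).Palindrome) :
    IsWMRH b (P ^ 2) := by
  refine ⟨P - sumDigits b (P ^ 2), ?_⟩
  rw [Nat.sub_add_cancel (sumDigits_sq_le_of_palindrome hb hP hpal),
    revDigits_eq_self_of_palindrome hpal, sq]
end

section
/- If N is a b-wARH number with k base-b digits and additive extra term A ≥ 0, then k ≤ A + 4. Consequently, for fixed b and A, the set of b-wARH numbers with extra term A is finite. -/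
/-- `N` is a `b`-wARH number with additive extra term `A`. -/
def IsWARHWith (b N A : ℕ) : Prop :=
  N = (A + sumDigits b N) + revDigits b (A + sumDigits b N)

lemma warh_base (c A : ℕ) : (c+3) * ((c+1)*(A+5) + A) < (c+2)^(A+4) := by
  induction A with
  | zero =>
      have h : (c+2)^(0+4) = c^4+8*c^3+24*c^2+32*c+16 := by ring
      rw [h]
      nlinarith [sq_nonneg c, pow_nonneg (Nat.zero_le c) 3, pow_nonneg (Nat.zero_le c) 4]
  | succ A ih =>
      have h4 : (c+2)^4 ≤ (c+2)^(A+4) := Nat.pow_le_pow_right (by omega) (by omega)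
      have hps : (c+2)^(A+1+4) = (c+2)^(A+4) * (c+2) := by ring
      rw [hps]
      have e1 : (c+2)^(A+4) * 2 ≤ (c+2)^(A+4) * (c+2) :=
        Nat.mul_le_mul_left _ (by omega)
      have e2 : (c+3)*(c+2) < (c+2)^4 := by
        have h : (c+2)^4 = c^4+8*c^3+24*c^2+32*c+16 := by ring
        rw [h]; nlinarith [pow_nonneg (Nat.zero_le c) 3, pow_nonneg (Nat.zero_le c) 4]
      have hexp : (c+3) * ((c+1)*(A+1+5) + (A+1)) =
          (c+3) * ((c+1)*(A+5) + A) + (c+3)*(c+2) := by ring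
      rw [hexp]
      linarith

lemma warh_key (b A k : ℕ) (hb : 2 ≤ b) (hk : A + 5 ≤ k) :
    (b+1) * ((b-1)*k + A) < b^(k-1) := by
  obtain ⟨c, rfl⟩ : ∃ c, b = c + 2 := ⟨b - 2, by omega⟩
  have hb1 : c + 2 - 1 = c + 1 := by omega
  rw [hb1]
  induction k, hk using Nat.le_induction with
  | base =>
      have h5 : A + 5 - 1 = A + 4 := by omega
      rw [h5]
      exact warh_base c A
  | succ k hk ih =>
      have hk1 : k + 1 - 1 = k := by omega
      rw [hk1]
      obtain ⟨m, hm⟩ : ∃ m, k = m + 1 := ⟨k - 1, by omega⟩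
      have hkm : k - 1 = m := by omega
      rw [hkm] at ih
      have hps : (c+2)^k = (c+2)^m * (c+2) := by rw [hm]; ring
      rw [hps]
      have h4 : (c+2)^4 ≤ (c+2)^m := Nat.pow_le_pow_right (by omega) (by omega)
      have e1 : (c+2)^m * 2 ≤ (c+2)^m * (c+2) := Nat.mul_le_mul_left _ (by omega)
      have e2 : (c+3)*(c+1) < (c+2)^4 := by
        have h : (c+2)^4 = c^4+8*c^3+24*c^2+32*c+16 := by ring
        rw [h]; nlinarith [pow_nonneg (Nat.zero_le c) 3, pow_nonneg (Nat.zero_le c) 4]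
      have hexp : (c+3) * ((c+1)*(k+1) + A) =
          (c+3) * ((c+1)*k + A) + (c+3)*(c+1) := by ring
      rw [hexp]
      linarith

theorem wARH_digit_bound (b : ℕ) (hb : 2 ≤ b) :
    (∀ N A : ℕ, IsWARHWith b N A → (Nat.digits b N).length ≤ A + 4) ∧
    ∀ A : ℕ, {N : ℕ | IsWARHWith b N A}.Finite := by
  have hb1 : 1 < b := hb
  have main : ∀ N A : ℕ, IsWARHWith b N A → (Nat.digits b N).length ≤ A + 4 := by
    intro N A h
    unfold IsWARHWith at h
    by_contra hlen
    push_neg at hlen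
    set k := (Nat.digits b N).length with hk
    have hk5 : A + 5 ≤ k := by omega
    have hN : N ≠ 0 := by
      intro h0
      rw [h0] at hk
      simp [Nat.digits_zero] at hk
      omega
    set M := A + sumDigits b N with hM
    have hsum : sumDigits b N ≤ (b-1) * k := by
      unfold sumDigits
      calc (Nat.digits b N).sum ≤ (Nat.digits b N).length • (b-1) := by
            apply List.sum_le_card_nsmul
            intro x hx
            have := Nat.digits_lt_base hb1 hx
            omega
        _ = (b-1) * k := by rw [smul_eq_mul, hk]; ring
    have hMle : M ≤ A + (b-1)*k := by omega
    have hM0 : M ≠ 0 := by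
      intro h0
      rw [h0] at h
      simp [revDigits, Nat.digits_zero] at h
      exact hN (by simpa using h)
    have hrev : revDigits b M < b * M := by
      unfold revDigits
      have h1 : Nat.ofDigits b (Nat.digits b M).reverse < b ^ (Nat.digits b M).reverse.length := by
        apply Nat.ofDigits_lt_base_pow_length hb1
        intro x hx
        exact Nat.digits_lt_base hb1 (List.mem_reverse.mp hx)
      have h2 : b ^ (Nat.digits b M).length ≤ b * M :=
        Nat.base_pow_length_digits_le b M hb1 hM0
      rw [List.length_reverse] at h1
      omega
    have hNlow : b ^ (k-1) ≤ N := by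
      have h2 : b ^ k ≤ b * N := Nat.base_pow_length_digits_le b N hb1 hN
      obtain ⟨m, hm⟩ : ∃ m, k = m + 1 := ⟨k - 1, by omega⟩
      have hkm : k - 1 = m := by omega
      rw [hkm]
      have h3 : b * b ^ m ≤ b * N := by
        calc b * b ^ m = b ^ (m+1) := (pow_succ' b m).symm
          _ = b ^ k := by rw [hm]
          _ ≤ b * N := h2
      exact Nat.le_of_mul_le_mul_left h3 (by omega)
    have hup : N < (b+1) * (A + (b-1)*k) := by
      have h5 : N < M + b * M := by omega
      have h3 : M + b * M = (b+1) * M := by ring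
      rw [h3] at h5
      calc N < (b+1) * M := h5
        _ ≤ (b+1) * (A + (b-1)*k) := Nat.mul_le_mul_left _ hMle
    have hkey := warh_key b A k hb hk5
    have heq : (b+1) * ((b-1)*k + A) = (b+1) * (A + (b-1)*k) := by ring
    omega
  refine ⟨main, fun A => ?_⟩
  apply Set.Finite.subset (Set.finite_Iio (b ^ (A+4)))
  intro N hN
  have hlen := main N A hN
  exact lt_of_lt_of_le (Nat.lt_base_pow_length_digits hb1)
    (Nat.pow_le_pow_right (by omega) hlen)
end

section
/- If N is a b-wARH number with k base-b digits and additive extra term A ≥ b^3, then k ≤ 2·⌊log_b A⌋. -/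
lemma add_three_lt_pow {b n : ℕ} (hb : 2 ≤ b) (hn : 3 ≤ n) : n + 3 < b ^ n := by
  induction n, hn using Nat.le_induction with
  | base => nlinarith [Nat.pow_le_pow_left hb 3]
  | succ n _ ih => rw [pow_succ]; nlinarith

lemma add_mul_lt_pow_succ {a b j : ℕ} (hb : 2 ≤ b) (hj : 3 ≤ j) (ha : a < b ^ j) :
    a + (b - 1) * (j + 3) < b ^ (j + 1) :=
  calc a + (b - 1) * (j + 3) < b ^ j + (b - 1) * b ^ j :=
        Nat.add_lt_add_of_lt_of_le ha (Nat.mul_le_mul_left _ (add_three_lt_pow hb hj).le)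
    _ = b ^ (j + 1) := by rw [← one_add_mul, Nat.add_sub_cancel' (by omega), pow_succ']

lemma sumDigits_le {b : ℕ} (hb : 1 < b) (N : ℕ) :
    sumDigits b N ≤ (b - 1) * (Nat.digits b N).length := by
  rw [sumDigits, mul_comm, ← smul_eq_mul]
  exact List.sum_le_card_nsmul _ _ fun d hd => Nat.le_sub_one_of_lt (Nat.digits_lt_base hb hd)

lemma revDigits_lt_base_pow_length {b : ℕ} (hb : 1 < b) (M : ℕ) :
    revDigits b M < b ^ (Nat.digits b M).length := by
  rw [revDigits, ← List.length_reverse]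
  exact Nat.ofDigits_lt_base_pow_length hb fun d hd =>
    Nat.digits_lt_base hb (List.mem_reverse.mp hd)

lemma digits_length_add_revDigits_le {b : ℕ} (hb : 2 ≤ b) (M : ℕ) :
    (Nat.digits b (M + revDigits b M)).length ≤ (Nat.digits b M).length + 1 := by
  rw [Nat.digits_length_le_iff hb, pow_succ]
  have hM := Nat.lt_base_pow_length_digits (m := M) hb
  have hrev := revDigits_lt_base_pow_length hb M
  nlinarith

namespace IsWARHWith

variable {b N A : ℕ}

lemma digits_length_le (hb : 2 ≤ b) (h : IsWARHWith b N A) :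
    (Nat.digits b N).length ≤ (Nat.digits b (A + sumDigits b N)).length + 1 := by
  have := digits_length_add_revDigits_le hb (A + sumDigits b N)
  rwa [← h] at this

lemma digits_length_le_log_add_three (hb : 2 ≤ b) (h : IsWARHWith b N A) :
    (Nat.digits b N).length ≤ max 5 (Nat.log b A + 3) := by
  have hs := sumDigits_le hb N
  set k := (Nat.digits b N).length
  by_contra! hk
  have hM : b ^ (k - 2) ≤ A + sumDigits b N := by
    rw [← Nat.lt_digits_length_iff (by omega)]
    have := h.digits_length_le hb
    omega
  have hA : A < b ^ (k - 3) :=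
    (Nat.lt_pow_succ_log_self (by omega) A).trans_le (Nat.pow_le_pow_right (by omega) (by omega))
  have hlt := add_mul_lt_pow_succ hb (by omega) hA
  rw [show k - 3 + 3 = k by omega, show k - 3 + 1 = k - 2 by omega] at hlt
  omega

end IsWARHWith

theorem wARH_digit_bound_large_A (b N A : ℕ) (hb : 2 ≤ b) (hA : b ^ 3 ≤ A)
    (h : IsWARHWith b N A) :
    (Nat.digits b N).length ≤ 2 * Nat.log b A := by
  have hlog : 3 ≤ Nat.log b A := Nat.le_log_of_pow_le hb hA
  have := h.digits_length_le_log_add_three hb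
  omega
end
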